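/- Let κ ≥ μ ≥ 0 and κ̂ ≥ μ̂ ≥ 0 be real numbers with κ > 0, κ̂ > 0, κ̂² + μ̂² = κ² + μ², and κ̂·μ̂ ≤ κ·μ. Define eccentricities ε = √(κ² - μ²)/κ and ε̂ = √(κ̂² - μ̂²)/κ̂. Then ε ≤ ε̂. -/

import Mathlib

/-! With the sum of squares `S` fixed, a smaller product `P` makes `(κ - μ)² = S - 2P` larger and
`(κ + μ)² = S + 2P` smaller, so the minor semi-axis shrinks and the major one grows. Hence the
axis ratio `μ / κ` decreases, and the eccentricity `√(1 - (μ / κ)²)` increases. -/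

theorem Real.sqrt_sq_sub_sq_div {a : ℝ} (ha : 0 < a) (b : ℝ) :
    √(a ^ 2 - b ^ 2) / a = √(1 - (b / a) ^ 2) := by
  rw [div_pow, one_sub_div (by positivity), Real.sqrt_div' _ (sq_nonneg a), Real.sqrt_sq ha.le]

section SumOfSquares

variable {a b c d : ℝ}

theorem sub_le_sub_of_sq_add_sq_eq_of_mul_le (hsum : c ^ 2 + d ^ 2 = a ^ 2 + b ^ 2)
    (hprod : c * d ≤ a * b) (hcd : d ≤ c) : a - b ≤ c - d :=
  (abs_le_of_sq_le_sq' (by nlinarith) (sub_nonneg.2 hcd)).2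

theorem add_le_add_of_sq_add_sq_eq_of_mul_le (hsum : c ^ 2 + d ^ 2 = a ^ 2 + b ^ 2)
    (hprod : c * d ≤ a * b) (hab : 0 ≤ a + b) : c + d ≤ a + b :=
  (abs_le_of_sq_le_sq' (by nlinarith) hab).2

theorem le_of_sq_add_sq_eq_of_mul_le (hsum : c ^ 2 + d ^ 2 = a ^ 2 + b ^ 2)
    (hprod : c * d ≤ a * b) (hcd : d ≤ c) (hab : 0 ≤ a + b) : d ≤ b := by
  linarith [sub_le_sub_of_sq_add_sq_eq_of_mul_le hsum hprod hcd,
    add_le_add_of_sq_add_sq_eq_of_mul_le hsum hprod hab]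

end SumOfSquares

theorem eccentricity_comparison_general
    (κ μ κh μh : ℝ) (h2 : μ ≥ 0) (h3 : κh ≥ μh) (h4 : μh ≥ 0)
    (hκ : κ > 0) (hκh : κh > 0)
    (hsum : κh ^ 2 + μh ^ 2 = κ ^ 2 + μ ^ 2) (hprod : κh * μh ≤ κ * μ) :
    Real.sqrt (κ ^ 2 - μ ^ 2) / κ ≤ Real.sqrt (κh ^ 2 - μh ^ 2) / κh := by
  have hμ : μh ≤ μ := le_of_sq_add_sq_eq_of_mul_le hsum hprod h3 (by positivity)
  have hκ_le : κ ≤ κh := (abs_le_of_sq_le_sq' (by nlinarith) hκh.le).2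
  have hratio : μh / κh ≤ μ / κ := div_le_div₀ h2 hμ hκ hκ_le
  rw [Real.sqrt_sq_sub_sq_div hκ, Real.sqrt_sq_sub_sq_div hκh]
  gcongr

theorem eccentricity_comparison
    (κ μ κh μh : ℝ) (h1 : κ ≥ μ) (h2 : μ ≥ 0) (h3 : κh ≥ μh) (h4 : μh ≥ 0)
    (hκ : κ > 0) (hκh : κh > 0)
    (hsum : κh ^ 2 + μh ^ 2 = κ ^ 2 + μ ^ 2) (hprod : κh * μh ≤ κ * μ) :
    Real.sqrt (κ ^ 2 - μ ^ 2) / κ ≤ Real.sqrt (κh ^ 2 - μh ^ 2) / κh :=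
  eccentricity_comparison_general κ μ κh μh h2 h3 h4 hκ hκh hsum hprod
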